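/- Let T be a tree on a finite set X and let D be a set of linear orders on X that is rich (every element of X is the top of some order in D) and single-peaked with respect to T. If D does not satisfy the top dominance property, then there exist x, y, z ∈ X and preferences P, P', P'' ∈ D such that x P y P z, x P' z P' y, and y P'' x P'' z. -/
import Mathlib


/-- `r` is a (strict) preference, i.e., a strict total order. -/
def IsPref {X : Type*} (r : X → X → Prop) : Prop := IsStrictTotalOrder X r

/-- `x` is the top (most preferred) element of `r`. -/
def TopOf {X : Type*} (r : X → X → Prop) (x : X) : Prop := ∀ y, y ≠ x → r x y

/-- `a` lies on the (unique) path from `x` to `y` in `G`. -/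
def OnPath {X : Type*} (G : SimpleGraph X) (a x y : X) : Prop :=
  ∀ p : G.Walk x y, p.IsPath → a ∈ p.support

/-- Single-peakedness with respect to a tree `G`. -/
def SPTree {X : Type*} (G : SimpleGraph X) (r : X → X → Prop) : Prop :=
  ∀ t a b, TopOf r t → OnPath G a t b → a = b ∨ r a b

/-- Classical single-peakedness with respect to a strict linear order `lt`. -/
def SPLine {X : Type*} (lt r : X → X → Prop) : Prop :=
  ∀ t x y, TopOf r t → (((x = t ∨ lt t x) ∧ lt x y) ∨ (lt y x ∧ (x = t ∨ lt x t))) → r x y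

/-- Richness: every alternative is the top of some admissible preference. -/
def Rich {X : Type*} (D : Set (X → X → Prop)) : Prop := ∀ x, ∃ P ∈ D, TopOf P x

/-- Top dominance property. -/
def TD {X : Type*} (D : Set (X → X → Prop)) : Prop :=
  ∀ x y z : X, (∃ P ∈ D, P x y ∧ P y z) → ¬ ∃ P ∈ D, P x z ∧ P z y

/-- Rotation property. -/
def Rotation {X : Type*} (D : Set (X → X → Prop)) : Prop :=
  ∀ x y z t : X, (∃ P ∈ D, P x y ∧ P y z ∧ P z t) → ¬ ∃ P ∈ D, P z x ∧ P x t

/-- `G` is a path graph (linear tree) on `k` vertices. -/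
def IsPathG {X : Type*} (G : SimpleGraph X) (k : ℕ) : Prop :=
  ∃ e : X ≃ Fin k, ∀ a b, G.Adj a b ↔ ((e a : ℕ) + 1 = e b ∨ (e b : ℕ) + 1 = e a)

/-- `G` is a star graph: some center adjacent to all other vertices, no other edges. -/
def IsStarG {X : Type*} (G : SimpleGraph X) : Prop :=
  ∃ c, ∀ a b, G.Adj a b ↔ a ≠ b ∧ (a = c ∨ b = c)

/-- A preference relation over the `n` agents of the opposite side. -/
abbrev PrefRel (n : ℕ) := Fin n → Fin n → Prop

/-- A preference profile: one preference (over women) per man, one (over men) per woman. -/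
abbrev Profile (n : ℕ) := (Fin n → PrefRel n) × (Fin n → PrefRel n)

/-- Membership in the anonymous product domain with men's set `Dm` and women's set `Dw`. -/
def InDomain {n : ℕ} (Dm Dw : Set (PrefRel n)) (p : Profile n) : Prop :=
  (∀ m, p.1 m ∈ Dm) ∧ (∀ w, p.2 w ∈ Dw)

/-- Pair `(m, w)` blocks matching `μ` at profile `p`. -/
def Blocks {n : ℕ} (p : Profile n) (μ : Fin n ≃ Fin n) (m w : Fin n) : Prop :=
  p.1 m w (μ m) ∧ p.2 w m (μ.symm w)

/-- Matching `μ` is stable at profile `p`. -/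
def StableAt {n : ℕ} (p : Profile n) (μ : Fin n ≃ Fin n) : Prop := ∀ m w, ¬ Blocks p μ m w

/-- The matching rule `φ` is stable on the domain. -/
def StableRule {n : ℕ} (Dm Dw : Set (PrefRel n)) (φ : Profile n → (Fin n ≃ Fin n)) : Prop :=
  ∀ p, InDomain Dm Dw p → StableAt p (φ p)

/-- Strategy-proofness on the domain: no unilateral in-domain misreport gives a strictly
better match. -/
def SP {n : ℕ} (Dm Dw : Set (PrefRel n)) (φ : Profile n → (Fin n ≃ Fin n)) : Prop :=
  ∀ p, InDomain Dm Dw p →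
    (∀ m P', P' ∈ Dm → ¬ p.1 m (φ (Function.update p.1 m P', p.2) m) (φ p m)) ∧
    (∀ w P', P' ∈ Dw → ¬ p.2 w ((φ (p.1, Function.update p.2 w P')).symm w) ((φ p).symm w))

/-- Non-bossiness: a unilateral report change leaving one's own match unchanged leaves the
whole matching unchanged. -/
def NonBossy {n : ℕ} (Dm Dw : Set (PrefRel n)) (φ : Profile n → (Fin n ≃ Fin n)) : Prop :=
  ∀ p, InDomain Dm Dw p →
    (∀ m P', P' ∈ Dm → φ (Function.update p.1 m P', p.2) m = φ p m →
       φ (Function.update p.1 m P', p.2) = φ p) ∧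
    (∀ w P', P' ∈ Dw → (φ (p.1, Function.update p.2 w P')).symm w = (φ p).symm w →
       φ (p.1, Function.update p.2 w P') = φ p)

/-- Man `m` is weakly better off under `μ'` than under `μ` (true preferences from `p`). -/
def MWeakBetter {n : ℕ} (p : Profile n) (μ μ' : Fin n ≃ Fin n) (m : Fin n) : Prop :=
  μ' m = μ m ∨ p.1 m (μ' m) (μ m)

/-- Woman `w` is weakly better off under `μ'` than under `μ`. -/
def WWeakBetter {n : ℕ} (p : Profile n) (μ μ' : Fin n ≃ Fin n) (w : Fin n) : Prop :=
  μ'.symm w = μ.symm w ∨ p.2 w (μ'.symm w) (μ.symm w)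

/-- Group strategy-proofness on the domain. -/
def GSP {n : ℕ} (Dm Dw : Set (PrefRel n)) (φ : Profile n → (Fin n ≃ Fin n)) : Prop :=
  ∀ p, InDomain Dm Dw p →
    ¬ ∃ (p' : Profile n) (S : Set (Fin n ⊕ Fin n)),
      InDomain Dm Dw p' ∧
      (∀ m, Sum.inl m ∉ S → p'.1 m = p.1 m) ∧
      (∀ w, Sum.inr w ∉ S → p'.2 w = p.2 w) ∧
      (∀ m, Sum.inl m ∈ S → MWeakBetter p (φ p) (φ p') m) ∧
      (∀ w, Sum.inr w ∈ S → WWeakBetter p (φ p) (φ p') w) ∧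
      ((∃ m, Sum.inl m ∈ S ∧ p.1 m (φ p' m) (φ p m)) ∨
       (∃ w, Sum.inr w ∈ S ∧ p.2 w ((φ p').symm w) ((φ p).symm w)))

open SimpleGraph

lemma exists_top {X : Type*} [Fintype X] [Nonempty X] {P : X → X → Prop}
    (hP : IsPref P) : ∃ t, TopOf P t := by
  haveI : IsStrictTotalOrder X P := hP
  have wf : WellFounded P := Finite.wellFounded_of_trans_of_irrefl P
  obtain ⟨t, -, ht⟩ := wf.has_min Set.univ ⟨Classical.arbitrary X, trivial⟩
  refine ⟨t, fun y hy => ?_⟩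
  rcases trichotomous_of P t y with h | h | h
  · exact h
  · exact absurd h.symm hy
  · exact absurd h (ht y trivial)

lemma onPath_of_mem {X : Type*} {G : SimpleGraph X} (hG : G.IsTree) {a x y : X}
    (p : G.Walk x y) (hp : p.IsPath) (ha : a ∈ p.support) : OnPath G a x y := by
  intro q hq
  rwa [(hG.existsUnique_path x y).unique hq hp]

lemma onPath_split {X : Type*} {G : SimpleGraph X} (hG : G.IsTree) {a b c : X}
    (h : OnPath G a b c) (t : X) : OnPath G a t b ∨ OnPath G a t c := by
  classical
  by_contra hc
  push_neg at hc
  obtain ⟨h1, h2⟩ := hc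
  simp only [OnPath, not_forall] at h1 h2
  obtain ⟨p1, hp1, ha1⟩ := h1
  obtain ⟨p2, hp2, ha2⟩ := h2
  have hw := h (p1.reverse.append p2).bypass (Walk.bypass_isPath _)
  have : a ∈ (p1.reverse.append p2).support := Walk.support_bypass_subset _ hw
  rw [Walk.mem_support_append_iff, Walk.support_reverse, List.mem_reverse] at this
  tauto

lemma first_in_set {X : Type*} {G : SimpleGraph X} (S : Set X) :
    ∀ {x y : X} (q : G.Walk x y), y ∈ S →
      ∃ (m : X) (q1 : G.Walk x m) (q2 : G.Walk m y),
        q = q1.append q2 ∧ m ∈ S ∧ ∀ v ∈ q1.support, v ∈ S → v = m := by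
  intro x y q
  induction q with
  | nil =>
    intro hy
    exact ⟨_, Walk.nil, Walk.nil, rfl, hy, by simp⟩
  | @cons u b y h p ih =>
    intro hy
    by_cases hu : u ∈ S
    · exact ⟨u, Walk.nil, Walk.cons h p, rfl, hu, by simp⟩
    · obtain ⟨m, q1, q2, heq, hm, hmin⟩ := ih hy
      refine ⟨m, Walk.cons h q1, q2, by rw [heq, Walk.cons_append], hm, ?_⟩
      intro v hv hvS
      rw [Walk.support_cons, List.mem_cons] at hv
      rcases hv with rfl | hv
      · exact absurd hvS hu
      · exact hmin v hv hvS

lemma exists_median {X : Type*} {G : SimpleGraph X} (hG : G.IsTree) (x y z : X) :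
    ∃ m, OnPath G m x y ∧ OnPath G m x z ∧ OnPath G m y z := by
  classical
  obtain ⟨q, hq, -⟩ := hG.existsUnique_path x y
  obtain ⟨r, hr, -⟩ := hG.existsUnique_path y z
  obtain ⟨m, q1, q2, heq, hm, hmin⟩ :=
    first_in_set {v | v ∈ r.support} q (r.start_mem_support)
  have hmq : m ∈ q.support := by
    rw [heq, Walk.mem_support_append_iff]; exact Or.inl q1.end_mem_support
  have hq1 : q1.IsPath := by
    rw [heq] at hq; exact hq.of_append_left
  set r2 := r.dropUntil m hm with hr2def
  have hr2 : r2.IsPath := hr.dropUntil hm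
  have hr2sub : r2.support ⊆ r.support := Walk.support_dropUntil_subset r hm
  have hdisj : ∀ v ∈ q1.support, v ∉ r2.support.tail := by
    intro v hv1 hv2
    have hvr : v ∈ r.support := hr2sub (List.mem_of_mem_tail hv2)
    have : v = m := hmin v hv1 hvr
    subst this
    have hnd : r2.support.Nodup := hr2.support_nodup
    rw [r2.support_eq_cons] at hnd
    exact (List.nodup_cons.mp hnd).1 hv2
  have hpath : (q1.append r2).IsPath := by
    rw [Walk.isPath_def, Walk.support_append]
    refine List.Nodup.append hq1.support_nodup ?_ ?_
    · exact List.Nodup.of_cons (r2.support_eq_cons ▸ hr2.support_nodup)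
    · intro v hv1 hv2; exact hdisj v hv1 hv2
  refine ⟨m, onPath_of_mem hG q hq hmq, ?_, onPath_of_mem hG r hr hm⟩
  exact onPath_of_mem hG (q1.append r2) hpath
    (by rw [Walk.mem_support_append_iff]; exact Or.inl q1.end_mem_support)

/-- a rich tree-single-peaked set violating top dominance contains the three
patterns `x y z`, `x z y`, `y x z`. -/
theorem stmt4 {X : Type*} [Fintype X] (G : SimpleGraph X) (hG : G.IsTree)
    (D : Set (X → X → Prop)) (hD : ∀ P ∈ D, IsPref P) (hsp : ∀ P ∈ D, SPTree G P)
    (hrich : Rich D) (hntd : ¬ TD D) :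
    ∃ x y z : X, (∃ P ∈ D, P x y ∧ P y z) ∧ (∃ P' ∈ D, P' x z ∧ P' z y) ∧
      (∃ P'' ∈ D, P'' y x ∧ P'' x z) := by
  unfold TD at hntd
  push_neg at hntd
  obtain ⟨x, y, z, ⟨P, hPD, hPxy, hPyz⟩, P', hP'D, hP'xz, hP'zy⟩ := hntd
  haveI : Nonempty X := ⟨x⟩
  haveI hPi : IsStrictTotalOrder X P := hD P hPD
  haveI hP'i : IsStrictTotalOrder X P' := hD P' hP'D
  have hPxz : P x z := _root_.trans_of P hPxy hPyz
  have hP'xy : P' x y := _root_.trans_of P' hP'xz hP'zy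
  have asymP : ∀ a b, P a b → ¬ P b a := fun a b h1 h2 =>
    irrefl_of P a (_root_.trans_of P h1 h2)
  have asymP' : ∀ a b, P' a b → ¬ P' b a := fun a b h1 h2 =>
    irrefl_of P' a (_root_.trans_of P' h1 h2)
  have neP : ∀ a b, P a b → a ≠ b := fun a b h1 h2 => irrefl_of P a (h2 ▸ h1)
  have neP' : ∀ a b, P' a b → a ≠ b := fun a b h1 h2 => irrefl_of P' a (h2 ▸ h1)
  -- lemma L
  have L : ∀ R ∈ D, ∀ a b c : X, OnPath G a b c → a = b ∨ a = c ∨ R a b ∨ R a c := by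
    intro R hR a b c h
    obtain ⟨t, ht⟩ := exists_top (hD R hR)
    rcases onPath_split hG h t with h1 | h1
    · rcases hsp R hR t a b ht h1 with h2 | h2
      · exact Or.inl h2
      · exact Or.inr (Or.inr (Or.inl h2))
    · rcases hsp R hR t a c ht h1 with h2 | h2
      · exact Or.inr (Or.inl h2)
      · exact Or.inr (Or.inr (Or.inr h2))
  obtain ⟨m, hmxy, hmxz, hmyz⟩ := exists_median hG x y z
  -- m ≠ y and m ≠ z
  have hmy : m ≠ y := by
    intro he
    rcases L P' hP'D m x z hmxz with h | h | h | h
    · exact neP' x y hP'xy (he ▸ h.symm)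
    · exact neP' z y hP'zy (he ▸ h.symm)
    · exact asymP' x y hP'xy (he ▸ h)
    · exact asymP' z y hP'zy (he ▸ h)
  have hmz : m ≠ z := by
    intro he
    rcases L P hPD m x y hmxy with h | h | h | h
    · exact neP x z hPxz (he ▸ h.symm)
    · exact neP y z hPyz (he ▸ h.symm)
    · exact asymP x z hPxz (he ▸ h)
    · exact asymP y z hPyz (he ▸ h)
  -- P m y
  have hPmy : P m y := by
    rcases L P hPD m x y hmxy with h | h | h | h
    · exact h ▸ hPxy
    · exact absurd h hmy
    · exact _root_.trans_of P h hPxy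
    · exact h
  -- P' m z
  have hP'mz : P' m z := by
    rcases L P' hP'D m x z hmxz with h | h | h | h
    · exact h ▸ hP'xz
    · exact absurd h hmz
    · exact _root_.trans_of P' h hP'xz
    · exact h
  -- Q with top y
  obtain ⟨Q, hQD, hQtop⟩ := hrich y
  have hQym : Q y m := hQtop m hmy
  have hQmz : Q m z := by
    rcases hsp Q hQD y m z hQtop hmyz with h | h
    · exact absurd h hmz
    · exact h
  exact ⟨m, y, z, ⟨P, hPD, hPmy, hPyz⟩, ⟨P', hP'D, hP'mz, hP'zy⟩, ⟨Q, hQD, hQym, hQmz⟩⟩
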